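/- arXiv:1801.02089 — 2 statements merged into one kernel-verified Lean document; each statement's English description precedes it below -/
import Mathlib

section
/- Let F : ℝⁿ → ℝ^m be continuous and semilinear. Then F is piecewise affine; more precisely, F admits a piecewise description (W⁽ˢ⁾, A⁽ˢ⁾, b⁽ˢ⁾)_{s∈[p]} in which each piece W⁽ˢ⁾ is a semilinear polyhedron, i.e., of the form {x ∈ ℝⁿ : Cx ≥ d} with C a rational matrix and d a real vector, and each matrix A⁽ˢ⁾ has rational entries. -/
/-!
Write a basic piece `S` of the graph as `{z | A z > b, C z = c}` and let `D = {x | (x, F x) ∈ S}`.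
Since `S` is open in the affine space `{C z = c}` and meets each fibre `{x} × ℝ^m` at most once,
the columns of `C` belonging to the `y`-coordinates are injective; a rational left inverse of them
solves the equations as `y = A' x + b'` with `A'` rational. Substituting, `D` is basic semilinear
in `ℝⁿ`, hence either lies in a rational hyperplane or is an open rational polyhedron.
The hyperplane pieces are null, so the closures of the polyhedral pieces cover `ℝⁿ`, and by
continuity `F` is affine on each closure, which is the corresponding closed polyhedron.
-/

open Finset

/-- The tropical semifield `𝕋 = ℝ ∪ {-∞}`, modeled as `WithBot ℝ`
(with `⊔` as tropical addition and `+` as tropical multiplication). -/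
abbrev Trop := WithBot ℝ

/-- A set `X ⊆ 𝕋ⁿ` is tropically convex if it is stable under tropical
convex combinations. -/
def TropicallyConvex {n : ℕ} (X : Set (Fin n → Trop)) : Prop :=
  ∀ x ∈ X, ∀ y ∈ X, ∀ l m : Trop, l ⊔ m = 0 →
    (fun i => (l + x i) ⊔ (m + y i)) ∈ X

/-- The tropical convex hull of `X ⊆ 𝕋ⁿ`. -/
def tconv {n : ℕ} (X : Set (Fin n → Trop)) : Set (Fin n → Trop) :=
  ⋂₀ {Y | TropicallyConvex Y ∧ X ⊆ Y}

/-- A basic semilinear set in `ℝ^d`: finitely many strict rational-linear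
inequalities and rational-linear equalities (with real right-hand sides). -/
def BasicSemilinear {d : ℕ} (S : Set (Fin d → ℝ)) : Prop :=
  ∃ (p q : ℕ) (A : Fin p → Fin d → ℚ) (b : Fin p → ℝ)
    (C : Fin q → Fin d → ℚ) (c : Fin q → ℝ),
    S = {x | (∀ i, ∑ j, (A i j : ℝ) * x j > b i) ∧ (∀ i, ∑ j, (C i j : ℝ) * x j = c i)}

/-- A semilinear set is a finite union of basic semilinear sets. -/
def Semilinear {d : ℕ} (S : Set (Fin d → ℝ)) : Prop :=
  ∃ (N : ℕ) (f : Fin N → Set (Fin d → ℝ)),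
    (∀ i, BasicSemilinear (f i)) ∧ S = ⋃ i, f i

/-- The stratum of `Y ⊆ 𝕋^d` associated with `K ⊆ [d]`, as a subset of
`ℝ^{|K|}` (the coordinates in `K` being enumerated in increasing order). -/
def stratum {d : ℕ} (Y : Set (Fin d → Trop)) (K : Finset (Fin d)) :
    Set (Fin K.card → ℝ) :=
  {z | ∃ y ∈ Y, (∀ k, y k ≠ ⊥ ↔ k ∈ K) ∧
        ∀ j : Fin K.card, y (K.orderIsoOfFin rfl j).1 = (z j : Trop)}

/-- A symmetric tropical Metzler matrix of size `m`, encoded by the data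
`(D⁺, D⁻, N)` of the moduli of the positive and negative diagonal entries
and of the (tropically negative or `-∞`) off-diagonal entries. -/
structure MetzlerData (m : ℕ) where
  Dp : Fin m → Trop
  Dm : Fin m → Trop
  offdiag : Fin m → Fin m → Trop
  diag_sign : ∀ i, Dp i = ⊥ ∨ Dm i = ⊥
  offdiag_symm : ∀ i j, offdiag i j = offdiag j i
  offdiag_diag : ∀ i, offdiag i i = ⊥

/-- The affine tropical polynomial `c ⊔ max_k (a_k + x_k)`. -/
noncomputable def tropAff {n : ℕ} (c : Trop) (a : Fin n → Trop) (x : Fin n → Trop) : Trop :=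
  c ⊔ Finset.univ.sup (fun k => a k + x k)

/-- The tropical Metzler spectrahedron `S(Q0 | Q 0, …, Q (n-1)) ⊆ 𝕋ⁿ`. -/
def metzlerSpectrahedron {n m : ℕ} (Q0 : MetzlerData m) (Q : Fin n → MetzlerData m) :
    Set (Fin n → Trop) :=
  {x | (∀ i, tropAff (Q0.Dm i) (fun k => (Q k).Dm i) x ≤
          tropAff (Q0.Dp i) (fun k => (Q k).Dp i) x) ∧
       ∀ i j, i ≠ j →
         tropAff (Q0.offdiag i j) (fun k => (Q k).offdiag i j) x
           + tropAff (Q0.offdiag i j) (fun k => (Q k).offdiag i j) x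
         ≤ tropAff (Q0.Dp i) (fun k => (Q k).Dp i) x
           + tropAff (Q0.Dp j) (fun k => (Q k).Dp j) x}

/-- Projection of `𝕋^{n+n'}` onto the first `n` coordinates. -/
def projFirst (n n' : ℕ) (x : Fin (n + n') → Trop) : Fin n → Trop :=
  fun i => x (Fin.castAdd n' i)

/-- `S ⊆ 𝕋ⁿ` is a projected tropical Metzler spectrahedron. -/
def IsProjMetzlerSpectrahedron {n : ℕ} (S : Set (Fin n → Trop)) : Prop :=
  ∃ (n' m : ℕ), 1 ≤ m ∧ ∃ (Q0 : MetzlerData m) (Q : Fin (n + n') → MetzlerData m),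
    S = projFirst n n' '' metzlerSpectrahedron Q0 Q

/-- The canonical embedding `ℝⁿ → 𝕋ⁿ`. -/
def toTrop {n : ℕ} (x : Fin n → ℝ) : Fin n → Trop := fun i => (x i : Trop)

/-- The homogenization of `S ⊆ 𝕋ⁿ`, a subset of `𝕋^{1+n}`
(first coordinate `x₀`, remaining coordinates `x₀ + x i`). -/
def homog {n : ℕ} (S : Set (Fin n → Trop)) : Set (Fin (n + 1) → Trop) :=
  {z | ∃ (x0 : Trop) (x : Fin n → Trop), x ∈ S ∧
        z = Fin.cons x0 (fun i => x0 + x i)}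

/-- A real tropical cone in `ℝⁿ`. -/
def RealTropCone {n : ℕ} (X : Set (Fin n → ℝ)) : Prop :=
  ∀ x ∈ X, ∀ y ∈ X, ∀ l m : ℝ, (fun i => max (l + x i) (m + y i)) ∈ X

/-- A function `F : ℝⁿ → ℝ^m` is semilinear if its graph is semilinear. -/
def SemilinearFun {n m : ℕ} (F : (Fin n → ℝ) → Fin m → ℝ) : Prop :=
  Semilinear (Set.range fun x => Fin.append x (F x))

/-- `F : ℝⁿ → ℝⁿ` is additively homogeneous. -/
def AddHomog {n : ℕ} (F : (Fin n → ℝ) → Fin n → ℝ) : Prop :=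
  ∀ (c : ℝ) (x : Fin n → ℝ), F (fun i => c + x i) = fun i => c + F x i

/-- A piecewise description of `F : ℝⁿ → ℝ^m`: finitely many closed polyhedra
with nonempty interior covering `ℝⁿ`, on each of which `F` is affine. -/
def IsPiecewiseDescription {n m : ℕ} (F : (Fin n → ℝ) → Fin m → ℝ) (p : ℕ)
    (W : Fin p → Set (Fin n → ℝ)) (A : Fin p → Fin m → Fin n → ℝ)
    (b : Fin p → Fin m → ℝ) : Prop :=
  (∀ s, ∃ (q : ℕ) (C : Fin q → Fin n → ℝ) (d : Fin q → ℝ),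
      W s = {x | ∀ i, d i ≤ ∑ j, C i j * x j}) ∧
  (∀ s, (interior (W s)).Nonempty) ∧
  (⋃ s, W s) = Set.univ ∧
  ∀ s, ∀ x ∈ W s, ∀ k, F x k = (∑ j, A s k j * x j) + b s k

/-- The all-`-∞` symmetric tropical Metzler matrix. -/
def botMetzler (m : ℕ) : MetzlerData m :=
  ⟨fun _ => ⊥, fun _ => ⊥, fun _ _ => ⊥, fun _ => Or.inl rfl, fun _ _ => rfl, fun _ => rfl⟩

open Matrix MeasureTheory Set Filter Topology

section Polyhedron

variable {ι κ : Type*} [Fintype κ]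

def openPolyhedron (P : Matrix ι κ ℝ) (c : ι → ℝ) : Set (κ → ℝ) :=
  {x | ∀ i, c i < (P *ᵥ x) i}

def closedPolyhedron (P : Matrix ι κ ℝ) (c : ι → ℝ) : Set (κ → ℝ) :=
  {x | ∀ i, c i ≤ (P *ᵥ x) i}

variable {P : Matrix ι κ ℝ} {c : ι → ℝ}

theorem isOpen_openPolyhedron [Finite ι] : IsOpen (openPolyhedron P c) := by
  simp only [openPolyhedron, ofPred_forall]
  exact isOpen_iInter_of_finite fun i => isOpen_lt continuous_const (by fun_prop)

theorem isClosed_closedPolyhedron : IsClosed (closedPolyhedron P c) := by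
  simp only [closedPolyhedron, ofPred_forall]
  exact isClosed_iInter fun i => isClosed_le continuous_const (by fun_prop)

theorem openPolyhedron_subset_closedPolyhedron : openPolyhedron P c ⊆ closedPolyhedron P c :=
  fun _ hx i => (hx i).le

theorem openSegment_subset_openPolyhedron {x y : κ → ℝ} (hx : x ∈ closedPolyhedron P c)
    (hy : y ∈ openPolyhedron P c) : openSegment ℝ x y ⊆ openPolyhedron P c := by
  rintro _ ⟨a, b, ha, hb, hab, rfl⟩ i
  rw [mulVec_add, mulVec_smul, mulVec_smul, Pi.add_apply, Pi.smul_apply, Pi.smul_apply,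
    smul_eq_mul, smul_eq_mul]
  have hc : c i = a * c i + b * c i := by rw [← add_mul, hab, one_mul]
  linarith [mul_le_mul_of_nonneg_left (hx i) ha.le, mul_lt_mul_of_pos_left (hy i) hb]

theorem closure_openPolyhedron (h : (openPolyhedron P c).Nonempty) :
    closure (openPolyhedron P c) = closedPolyhedron P c := by
  refine (closure_minimal openPolyhedron_subset_closedPolyhedron
    isClosed_closedPolyhedron).antisymm fun x hx => ?_
  obtain ⟨y, hy⟩ := h
  exact closure_mono (openSegment_subset_openPolyhedron hx hy)
    (segment_subset_closure_openSegment (left_mem_segment ℝ x y))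

end Polyhedron

theorem volume_setOf_dotProduct_eq {κ : Type*} [Fintype κ] {r : κ → ℝ} (hr : r ≠ 0) (c : ℝ) :
    volume {x : κ → ℝ | r ⬝ᵥ x = c} = 0 := by
  rcases eq_empty_or_nonempty {x : κ → ℝ | r ⬝ᵥ x = c} with h | ⟨x₀, hx₀⟩
  · rw [h, measure_empty]
  let φ : (κ → ℝ) →ₗ[ℝ] ℝ := dotProductBilin ℝ ℝ r
  refine measure_mono_null (fun x hx => ?_) (Measure.addHaar_affineSubspace volume
    (AffineSubspace.mk' x₀ (LinearMap.ker φ)) fun htop => ?_)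
  · rw [SetLike.mem_coe, AffineSubspace.mem_mk', vsub_eq_sub, LinearMap.mem_ker]
    simp [φ, dotProduct_sub, hx.out, hx₀.out]
  · have : r ∈ LinearMap.ker φ := by
      rw [← AffineSubspace.direction_mk' x₀ (LinearMap.ker φ), htop, AffineSubspace.direction_top]
      trivial
    exact hr (dotProduct_self_eq_zero.1 this)

theorem mulVec_finAppend {R ι : Type*} [NonUnitalNonAssocSemiring R] {n m : ℕ}
    (M : Matrix ι (Fin (n + m)) R) (x : Fin n → R) (y : Fin m → R) :
    M *ᵥ Fin.append x y =
      M.submatrix id (Fin.castAdd m) *ᵥ x + M.submatrix id (Fin.natAdd n) *ᵥ y := by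
  ext i
  simp [mulVec, dotProduct, Fin.sum_univ_add]

theorem exists_mul_eq_one_of_map_mulVec_eq_zero {K L ι κ : Type*} [Field K] [Field L]
    [Fintype ι] [Fintype κ] [DecidableEq κ] (f : K →+* L) {C : Matrix ι κ K}
    (hC : ∀ w : κ → L, C.map f *ᵥ w = 0 → w = 0) : ∃ B : Matrix κ ι K, B * C = 1 := by
  classical
  have hker : LinearMap.ker C.mulVecLin = ⊥ := by
    refine LinearMap.ker_eq_bot'.2 fun w hw => funext fun k => f.injective ?_
    have hfw : C.map f *ᵥ (f ∘ w) = 0 := by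
      ext i
      rw [← RingHom.map_mulVec, ← mulVecLin_apply, hw, Pi.zero_apply, Pi.zero_apply, map_zero]
    simpa using congrFun (hC _ hfw) k
  obtain ⟨g, hg⟩ := C.mulVecLin.exists_leftInverse_of_injective hker
  refine ⟨LinearMap.toMatrix' g, Matrix.toLin'.injective ?_⟩
  rw [Matrix.toLin'_apply', Matrix.toLin'_apply', mulVecLin_mul, ← Matrix.toLin'_apply',
    Matrix.toLin'_toMatrix', hg, mulVecLin_one]

section BasicSet

variable {n m p q d : ℕ}

def basicSet (A : Matrix (Fin p) (Fin d) ℚ) (b : Fin p → ℝ) (C : Matrix (Fin q) (Fin d) ℚ)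
    (c : Fin q → ℝ) : Set (Fin d → ℝ) :=
  openPolyhedron (A.map (Rat.castHom ℝ)) b ∩ {x | C.map (Rat.castHom ℝ) *ᵥ x = c}

theorem basicSemilinear_iff {S : Set (Fin d → ℝ)} :
    BasicSemilinear S ↔ ∃ (p q : ℕ) (A : Matrix (Fin p) (Fin d) ℚ) (b : Fin p → ℝ)
      (C : Matrix (Fin q) (Fin d) ℚ) (c : Fin q → ℝ), S = basicSet A b C c := by
  simp only [BasicSemilinear, basicSet, openPolyhedron, funext_iff]
  rfl

theorem eq_zero_of_mulVec_natAdd_eq_zero {A : Matrix (Fin p) (Fin (n + m)) ℚ} {b : Fin p → ℝ}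
    {C : Matrix (Fin q) (Fin (n + m)) ℚ} {c : Fin q → ℝ}
    (hfun : ∀ x y y', Fin.append x y ∈ basicSet A b C c → Fin.append x y' ∈ basicSet A b C c →
      y = y')
    {x₀ : Fin n → ℝ} {y₀ : Fin m → ℝ} (h₀ : Fin.append x₀ y₀ ∈ basicSet A b C c)
    {w : Fin m → ℝ} (hw : (C.submatrix id (Fin.natAdd n)).map (Rat.castHom ℝ) *ᵥ w = 0) :
    w = 0 := by
  have hnear : ∀ᶠ t in 𝓝 (0 : ℝ),
      Fin.append x₀ (y₀ + t • w) ∈ openPolyhedron (A.map (Rat.castHom ℝ)) b := by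
    have hcont : Continuous fun t : ℝ => A.map (Rat.castHom ℝ) *ᵥ Fin.append x₀ (y₀ + t • w) := by
      simp only [mulVec_finAppend]
      fun_prop
    refine eventually_all.2 fun i =>
      Tendsto.eventually_const_lt ?_ (((continuous_apply i).comp hcont).tendsto 0)
    simpa using h₀.1 i
  obtain ⟨t, ht, ht0⟩ := ((hnear.filter_mono nhdsWithin_le_nhds).and
    (self_mem_nhdsWithin : {t : ℝ | t ≠ 0} ∈ 𝓝[≠] 0)).exists
  have hmem : Fin.append x₀ (y₀ + t • w) ∈ basicSet A b C c := by
    refine ⟨ht, ?_⟩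
    have hw' : (C.map (Rat.castHom ℝ)).submatrix id (Fin.natAdd n) *ᵥ w = 0 := hw
    have h₀C : C.map (Rat.castHom ℝ) *ᵥ Fin.append x₀ y₀ = c := h₀.2
    rwa [mem_ofPred_eq, mulVec_finAppend, mulVec_add, mulVec_smul, hw', smul_zero, add_zero,
      ← mulVec_finAppend]
  exact (smul_eq_zero.1 (add_eq_left.1 (hfun _ _ _ hmem h₀))).resolve_left ht0

theorem exists_rat_affine_of_functional {A : Matrix (Fin p) (Fin (n + m)) ℚ} {b : Fin p → ℝ}
    {C : Matrix (Fin q) (Fin (n + m)) ℚ} {c : Fin q → ℝ}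
    (hfun : ∀ x y y', Fin.append x y ∈ basicSet A b C c → Fin.append x y' ∈ basicSet A b C c →
      y = y')
    (hne : (basicSet A b C c).Nonempty) :
    ∃ (A' : Matrix (Fin m) (Fin n) ℚ) (b' : Fin m → ℝ),
      ∀ x y, Fin.append x y ∈ basicSet A b C c → y = A'.map (Rat.castHom ℝ) *ᵥ x + b' := by
  obtain ⟨z, hz⟩ := hne
  rw [← Fin.append_castAdd_natAdd (f := z)] at hz
  obtain ⟨L, hL⟩ := exists_mul_eq_one_of_map_mulVec_eq_zero (Rat.castHom ℝ)
    fun w => eq_zero_of_mulVec_natAdd_eq_zero hfun hz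
  refine ⟨-(L * C.submatrix id (Fin.castAdd m)), L.map (Rat.castHom ℝ) *ᵥ c, fun x y hxy => ?_⟩
  have hCy : (C.submatrix id (Fin.natAdd n)).map (Rat.castHom ℝ) *ᵥ y =
      c - (C.submatrix id (Fin.castAdd m)).map (Rat.castHom ℝ) *ᵥ x := by
    have hC : C.map (Rat.castHom ℝ) *ᵥ Fin.append x y = c := hxy.2
    rw [mulVec_finAppend, submatrix_map, submatrix_map] at hC
    exact eq_sub_of_add_eq' hC
  calc y = (L * C.submatrix id (Fin.natAdd n)).map (Rat.castHom ℝ) *ᵥ y := by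
        rw [hL, Matrix.map_one _ (map_zero _) (map_one _), one_mulVec]
    _ = _ := by
      rw [Matrix.map_mul, ← mulVec_mulVec, hCy, mulVec_sub, Matrix.map_neg _ (map_neg _),
        Matrix.map_mul, neg_mulVec, ← mulVec_mulVec]
      abel

theorem preimage_basicSet_finAppend (A : Matrix (Fin p) (Fin (n + m)) ℚ) (b : Fin p → ℝ)
    (C : Matrix (Fin q) (Fin (n + m)) ℚ) (c : Fin q → ℝ) (A' : Matrix (Fin m) (Fin n) ℚ)
    (b' : Fin m → ℝ) :
    {x | Fin.append x (A'.map (Rat.castHom ℝ) *ᵥ x + b') ∈ basicSet A b C c} =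
      basicSet (A.submatrix id (Fin.castAdd m) + A.submatrix id (Fin.natAdd n) * A')
        (b - (A.submatrix id (Fin.natAdd n)).map (Rat.castHom ℝ) *ᵥ b')
        (C.submatrix id (Fin.castAdd m) + C.submatrix id (Fin.natAdd n) * A')
        (c - (C.submatrix id (Fin.natAdd n)).map (Rat.castHom ℝ) *ᵥ b') := by
  ext x
  simp only [basicSet, openPolyhedron, mem_inter_iff, mem_ofPred_eq, mulVec_finAppend,
    submatrix_map, Matrix.map_add _ (map_add (Rat.castHom ℝ)), Matrix.map_mul, add_mulVec,
    mulVec_add, ← mulVec_mulVec, Pi.add_apply, Pi.sub_apply, sub_lt_iff_lt_add,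
    eq_sub_iff_add_eq, add_assoc]

theorem volume_basicSet_eq_zero_or_eq_openPolyhedron (P : Matrix (Fin p) (Fin n) ℚ)
    (c : Fin p → ℝ) (Q : Matrix (Fin q) (Fin n) ℚ) (c' : Fin q → ℝ) :
    volume (basicSet P c Q c') = 0 ∨
      basicSet P c Q c' = openPolyhedron (P.map (Rat.castHom ℝ)) c := by
  by_cases hQ : Q = 0
  · subst hQ
    by_cases hc' : c' = 0
    · subst hc'
      right
      ext x
      simp [basicSet]
    · left
      convert measure_empty (μ := volume)
      simp [basicSet, eq_comm, hc']
  · obtain ⟨i, hi⟩ : ∃ i, Q i ≠ 0 := by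
      by_contra! h
      exact hQ (funext h)
    left
    refine measure_mono_null (fun x hx => congrFun hx.2 i) (volume_setOf_dotProduct_eq ?_ (c' i))
    intro h
    exact hi (funext fun j => by simpa using congrFun h j)

end BasicSet

theorem iUnion_closure_eq_univ_of_null_or {X ι : Type*} [TopologicalSpace X] [MeasurableSpace X]
    {μ : Measure X} [μ.IsOpenPosMeasure] [Finite ι] {D : ι → Set X} {p : ι → Prop}
    (hcover : ⋃ i, D i = univ) (hD : ∀ i, μ (D i) = 0 ∨ p i) :
    ⋃ i : {i // p i}, closure (D i) = univ := by
  rw [← closure_iUnion_of_finite]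
  refine (μ.dense_of_ae (ae_iff.2 (measure_mono_null (fun x hx => ?_)
    (measure_iUnion_null fun i : {i // ¬ p i} => (hD i).resolve_right i.2)))).closure_eq
  obtain ⟨i, hi⟩ := mem_iUnion.1 (hcover ▸ mem_univ x)
  exact mem_iUnion.2 ⟨⟨i, fun h => hx (mem_iUnion.2 ⟨⟨i, h⟩, hi⟩)⟩, hi⟩

section Pieces

variable {n m : ℕ}

def IsRatAffinePiece (F : (Fin n → ℝ) → Fin m → ℝ) (U : Set (Fin n → ℝ)) : Prop :=
  ∃ (q : ℕ) (P : Matrix (Fin q) (Fin n) ℚ) (c : Fin q → ℝ) (A : Matrix (Fin m) (Fin n) ℚ)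
    (b : Fin m → ℝ), U = openPolyhedron (P.map (Rat.castHom ℝ)) c ∧ U.Nonempty ∧
      ∀ x ∈ U, F x = A.map (Rat.castHom ℝ) *ᵥ x + b

theorem volume_eq_zero_or_isRatAffinePiece {F : (Fin n → ℝ) → Fin m → ℝ}
    {S : Set (Fin (n + m) → ℝ)} (hS : BasicSemilinear S)
    (hSF : S ⊆ range fun x => Fin.append x (F x)) :
    volume {x | Fin.append x (F x) ∈ S} = 0 ∨
      IsRatAffinePiece F {x | Fin.append x (F x) ∈ S} := by
  obtain ⟨p, q, A, b, C, c, rfl⟩ := basicSemilinear_iff.1 hS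
  have hgraph : ∀ x y, Fin.append x y ∈ basicSet A b C c → F x = y := by
    intro x y hxy
    obtain ⟨x', hx'⟩ := hSF hxy
    obtain ⟨rfl, hy⟩ := Prod.mk_inj.1
      ((Fin.appendEquiv n m).injective (a₁ := (x', F x')) (a₂ := (x, y)) hx')
    exact hy
  rcases eq_empty_or_nonempty {x | Fin.append x (F x) ∈ basicSet A b C c} with h | ⟨x₀, hx₀⟩
  · exact Or.inl (h ▸ measure_empty)
  obtain ⟨A', b', hA'⟩ := exists_rat_affine_of_functional
    (fun x y y' hy hy' => (hgraph x y hy).symm.trans (hgraph x y' hy')) ⟨_, hx₀⟩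
  have hD : {x | Fin.append x (F x) ∈ basicSet A b C c} =
      {x | Fin.append x (A'.map (Rat.castHom ℝ) *ᵥ x + b') ∈ basicSet A b C c} := by
    ext x
    constructor
    · intro hx
      rwa [mem_ofPred_eq, ← hA' x (F x) hx]
    · intro hx
      rwa [mem_ofPred_eq, hgraph x _ hx]
  rw [hD, preimage_basicSet_finAppend] at hx₀ ⊢
  refine (volume_basicSet_eq_zero_or_eq_openPolyhedron _ _ _ _).imp_right
    fun hU => ⟨_, _, _, A', b', hU, ⟨x₀, hx₀⟩, fun x hx => ?_⟩
  rw [← preimage_basicSet_finAppend, ← hD] at hx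
  exact hA' x (F x) hx

theorem exists_ratPiecewiseDescription {ι : Type*} [Finite ι] {F : (Fin n → ℝ) → Fin m → ℝ}
    (hF : Continuous F) {U : ι → Set (Fin n → ℝ)} (hU : ∀ i, IsRatAffinePiece F (U i))
    (hcover : ⋃ i, closure (U i) = univ) :
    ∃ (p : ℕ) (W : Fin p → Set (Fin n → ℝ)) (A : Fin p → Fin m → Fin n → ℝ)
      (b : Fin p → Fin m → ℝ),
      IsPiecewiseDescription F p W A b ∧
      (∀ s, ∃ (q : ℕ) (C : Fin q → Fin n → ℚ) (d : Fin q → ℝ),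
          W s = {x | ∀ i, d i ≤ ∑ j, (C i j : ℝ) * x j}) ∧
      (∀ s k j, ∃ r : ℚ, A s k j = (r : ℝ)) := by
  choose q P c A b hPc hne hAb using hU
  have hclosure : ∀ i, closure (U i) = closedPolyhedron ((P i).map (Rat.castHom ℝ)) (c i) :=
    fun i => hPc i ▸ closure_openPolyhedron (hPc i ▸ hne i)
  have hint : ∀ i, U i ⊆ interior (closure (U i)) :=
    fun i => interior_maximal subset_closure (hPc i ▸ isOpen_openPolyhedron)
  let e := (Finite.equivFin ι).symm
  refine ⟨Nat.card ι, fun s => closure (U (e s)), fun s => (A (e s)).map (Rat.castHom ℝ),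
    fun s => b (e s), ⟨fun s => ⟨_, _, _, hclosure _⟩, fun s => (hne _).mono (hint _), ?_,
    fun s x hx k => ?_⟩, fun s => ⟨_, P _, c _, hclosure _⟩, fun s k j => ⟨A _ k j, rfl⟩⟩
  · rwa [e.surjective.iUnion_comp fun i => closure (U i)]
  · exact congrFun (EqOn.closure (hAb (e s)) hF (by fun_prop) hx) k

end Pieces

theorem stmt13 {n m : ℕ} (F : (Fin n → ℝ) → Fin m → ℝ)
    (hcont : Continuous F) (hsl : SemilinearFun F) :
    ∃ (p : ℕ) (W : Fin p → Set (Fin n → ℝ)) (A : Fin p → Fin m → Fin n → ℝ)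
      (b : Fin p → Fin m → ℝ),
      IsPiecewiseDescription F p W A b ∧
      (∀ s, ∃ (q : ℕ) (C : Fin q → Fin n → ℚ) (d : Fin q → ℝ),
          W s = {x | ∀ i, d i ≤ ∑ j, (C i j : ℝ) * x j}) ∧
      (∀ s k j, ∃ r : ℚ, A s k j = (r : ℝ)) := by
  obtain ⟨N, S, hS, hgraph⟩ := hsl
  let D : Fin N → Set (Fin n → ℝ) := fun i => {x | Fin.append x (F x) ∈ S i}
  have hcover : ⋃ i, D i = univ := eq_univ_of_forall fun x => by
    have hx : Fin.append x (F x) ∈ ⋃ i, S i := hgraph ▸ mem_range_self x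
    obtain ⟨i, hi⟩ := mem_iUnion.1 hx
    exact mem_iUnion.2 ⟨i, hi⟩
  have hD : ∀ i, volume (D i) = 0 ∨ IsRatAffinePiece F (D i) :=
    fun i => volume_eq_zero_or_isRatAffinePiece (hS i) (hgraph ▸ subset_iUnion S i)
  exact exists_ratPiecewiseDescription hcont (fun i => i.2)
    (iUnion_closure_eq_univ_of_null_or hcover hD)
end

section
/- Let F : ℝⁿ → ℝ^m be a piecewise affine function with piecewise description (W⁽ˢ⁾, A⁽ˢ⁾, b⁽ˢ⁾)_{s∈[p]}. Then for every k ∈ [m] there exist an integer M_k ≥ 1 and nonempty subsets S_{k1}, …, S_{kM_k} ⊆ [p] such that for all x ∈ ℝⁿ: F_k(x) = min_{i ∈ [M_k]} max_{s ∈ S_{ki}} ( ⟨A⁽ˢ⁾_k, x⟩ + b⁽ˢ⁾_k ), where A⁽ˢ⁾_k denotes the k-th row of A⁽ˢ⁾. -/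
open Finset

/-! Ovchinnikov's argument. Write `g s` for the affine piece `x ↦ ⟨A⁽ˢ⁾_k, x⟩ + b⁽ˢ⁾_k`. For any
two points `z, x`, walking along the segment from `z` to `x` through the closed pieces shows that
some `s` has `g s z ≤ F z` and `F x ≤ g s x`. Hence for `S_z = {s | g s z ≤ F z}` the function
`max_{s ∈ S_z} g s` lies above `F_k` everywhere and touches it at `z`, so `F_k = min_z max_{S_z} g s`,
and only finitely many distinct sets `S_z` occur. -/

theorem exists_mem_le_and_ge_of_Icc_subset_biUnion {ι : Type*} (f : ℝ → ℝ) (a c : ι → ℝ)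
    (I : ι → Set ℝ) (hI : ∀ s, IsClosed (I s)) (hf : ∀ s, ∀ t ∈ I s, f t = a s + t * c s)
    (S : Finset ι) {u v : ℝ} (huv : u ≤ v) (hcov : Set.Icc u v ⊆ ⋃ s ∈ S, I s) :
    ∃ s ∈ S, a s + u * c s ≤ f u ∧ f v ≤ a s + v * c s := by
  classical
  induction S using Finset.strongInduction generalizing v with
  | H S ih =>
    obtain ⟨s₀, hs₀, hv⟩ : ∃ s ∈ S, v ∈ I s := by simpa using hcov ⟨huv, le_rfl⟩
    obtain ⟨w, ⟨hw, huw, hwv⟩, hw_least⟩ : ∃ w, IsLeast (I s₀ ∩ Set.Icc u v) w :=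
      (isCompact_Icc.inter_left (hI s₀)).exists_isLeast ⟨v, hv, huv, le_rfl⟩
    rcases huw.eq_or_lt with rfl | hlt
    · exact ⟨s₀, hs₀, (hf s₀ _ hw).ge, (hf s₀ v hv).le⟩
    have hcov' : Set.Icc u w ⊆ ⋃ s ∈ S.erase s₀, I s := by
      have hsub : Set.Ico u w ⊆ ⋃ s ∈ S.erase s₀, I s := by
        intro t ht
        obtain ⟨s, hs, hts⟩ : ∃ s ∈ S, t ∈ I s := by
          simpa using hcov ⟨ht.1, ht.2.le.trans hwv⟩
        have hne : s ≠ s₀ := by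
          rintro rfl
          exact (hw_least ⟨hts, ht.1, ht.2.le.trans hwv⟩).not_gt ht.2
        exact Set.mem_biUnion (mem_erase.2 ⟨hne, hs⟩) hts
      rw [← closure_Ico hlt.ne]
      exact closure_minimal hsub (isClosed_biUnion_finset fun s _ => hI s)
    obtain ⟨s, hs, hu, hw'⟩ := ih _ (erase_ssubset hs₀) hlt.le hcov'
    by_cases hsv : f v ≤ a s + v * c s
    · exact ⟨s, mem_of_mem_erase hs, hu, hsv⟩
    refine ⟨s₀, hs₀, ?_, (hf s₀ v hv).le⟩
    rw [hf s₀ w hw] at hw'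
    rw [hf s₀ v hv] at hsv
    -- `t ↦ (a s₀ + t c s₀) - (a s + t c s)` is `≤ 0` at `w` and `> 0` at `v`, so it increases
    have hc : c s < c s₀ := by nlinarith
    nlinarith

theorem exists_le_and_ge_of_iUnion_eq_univ {E ι : Type*} [AddCommGroup E] [Module ℝ E]
    [TopologicalSpace E] [IsTopologicalAddGroup E] [ContinuousSMul ℝ E] [Fintype ι]
    (f : E → ℝ) (g : ι → E →ᵃ[ℝ] ℝ) (W : ι → Set E) (hW : ∀ s, IsClosed (W s))
    (hcov : ⋃ s, W s = Set.univ) (hf : ∀ s, ∀ x ∈ W s, f x = g s x) (z x : E) :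
    ∃ s, g s z ≤ f z ∧ f x ≤ g s x := by
  let L : ℝ →ᵃ[ℝ] E := AffineMap.lineMap z x
  obtain ⟨s, -, hz, hx⟩ := exists_mem_le_and_ge_of_Icc_subset_biUnion (f ∘ L)
    (fun s => g s z) (fun s => g s x - g s z) (fun s => L ⁻¹' W s)
    (fun s => (hW s).preimage AffineMap.lineMap_continuous)
    (fun s t ht => by
      rw [Function.comp_apply, hf s _ ht, AffineMap.apply_lineMap, AffineMap.lineMap_apply_ring']
      ring)
    univ zero_le_one (fun t _ => by simpa using hcov.ge (Set.mem_univ (L t)))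
  refine ⟨s, ?_, ?_⟩
  · simpa [L] using hz
  · simpa [L] using hx

theorem exists_inf'_sup'_eq_of_forall_exists_le_ge {X ι α : Type*} [Nonempty X] [Fintype ι]
    [LinearOrder α] (f : X → α) (g : ι → X → α)
    (h : ∀ z x, ∃ s, g s z ≤ f z ∧ f x ≤ g s x) :
    ∃ (M : ℕ) (hM : 0 < M) (Ss : Fin M → Finset ι) (hS : ∀ i, (Ss i).Nonempty),
      ∀ x, f x = univ.inf' ⟨⟨0, hM⟩, mem_univ _⟩ (fun i => (Ss i).sup' (hS i) (g · x)) := by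
  classical
  let below : X → Finset ι := fun z => univ.filter fun s => g s z ≤ f z
  let G : Finset (Finset ι) := univ.filter fun T => ∃ z, below z = T
  have mem_G (z : X) : below z ∈ G := mem_filter.2 ⟨mem_univ _, z, rfl⟩
  let Ss : Fin G.card → Finset ι := fun i => G.equivFin.symm i
  have hSs (i : Fin G.card) : ∃ z, below z = Ss i := (mem_filter.1 (G.equivFin.symm i).2).2
  have hS (i : Fin G.card) : (Ss i).Nonempty := by
    obtain ⟨z, hz⟩ := hSs i
    obtain ⟨s, hs, -⟩ := h z z
    exact ⟨s, hz ▸ mem_filter.2 ⟨mem_univ _, hs⟩⟩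
  obtain ⟨z₀⟩ := ‹Nonempty X›
  refine ⟨G.card, card_pos.2 ⟨_, mem_G z₀⟩, Ss, hS, fun x => le_antisymm ?_ ?_⟩
  · refine le_inf' _ _ fun i _ => ?_
    obtain ⟨z, hz⟩ := hSs i
    obtain ⟨s, hsz, hsx⟩ := h z x
    exact hsx.trans (le_sup' (g · x) (hz ▸ mem_filter.2 ⟨mem_univ _, hsz⟩))
  · refine (inf'_le _ (mem_univ (G.equivFin ⟨below x, mem_G x⟩))).trans
      (sup'_le _ _ fun s hs => ?_)
    simp only [Ss, Equiv.symm_apply_apply] at hs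
    exact (mem_filter.1 hs).2

theorem isClosed_setOf_forall_le_sum_mul {ι κ : Type*} [Fintype κ] (C : ι → κ → ℝ) (d : ι → ℝ) :
    IsClosed {x : κ → ℝ | ∀ i, d i ≤ ∑ j, C i j * x j} := by
  simp only [Set.ofPred_forall]
  exact isClosed_iInter fun i => isClosed_le continuous_const (by fun_prop)

theorem stmt15 {n m p : ℕ} (F : (Fin n → ℝ) → Fin m → ℝ)
    (W : Fin p → Set (Fin n → ℝ)) (A : Fin p → Fin m → Fin n → ℝ)
    (b : Fin p → Fin m → ℝ)
    (h : IsPiecewiseDescription F p W A b) :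
    ∀ k : Fin m, ∃ (M : ℕ) (hM : 0 < M) (Ss : Fin M → Finset (Fin p))
      (hS : ∀ i, (Ss i).Nonempty),
      ∀ x, F x k =
        Finset.univ.inf' ⟨⟨0, hM⟩, Finset.mem_univ _⟩ (fun i =>
          (Ss i).sup' (hS i) (fun s => (∑ j, A s k j * x j) + b s k)) := by
  obtain ⟨hpoly, -, hcov, hF⟩ := h
  have hW (s : Fin p) : IsClosed (W s) := by
    obtain ⟨q, C, d, hs⟩ := hpoly s
    exact hs ▸ isClosed_setOf_forall_le_sum_mul C d
  intro k
  let g : Fin p → (Fin n → ℝ) →ᵃ[ℝ] ℝ := fun s =>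
    (dotProductBilin ℝ ℝ (A s k)).toAffineMap + AffineMap.const ℝ _ (b s k)
  exact exists_inf'_sup'_eq_of_forall_exists_le_ge (F · k) (fun s x => g s x)
    (exists_le_and_ge_of_iUnion_eq_univ (F · k) g W hW hcov fun s x hx => hF s x hx k)
end
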